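/- If (ω₁, ω₂) generates a taut contact circle on a 3-manifold with Reeb fields R₁, R₂, then R₁ ⨼ dω₂ + R₂ ⨼ dω₁ = 0 and (R₁ ⨼ dω₂)·(ω₁(R₂) + ω₂(R₁)) = 0; combined with the everywhere linear independence of R₁ and R₂ (which forces R₁ ⨼ dω₂ ≠ 0 everywhere), it follows that the contact circle is round. -/

import Mathlib

open scoped BigOperators

noncomputable section

abbrev E3 : Type := Fin 3 → ℝ

/-- Exterior derivative of a 1-form on ℝ³, evaluated at `x` on `u, v`. -/
def extd (ω : E3 → E3 →L[ℝ] ℝ) (x u v : E3) : ℝ :=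
  fderiv ℝ (fun y => ω y v) x u - fderiv ℝ (fun y => ω y u) x v

/-- Evaluation of the 3-form `a ∧ b` (degrees 1, 2) on three vectors. -/
def wedge12 (a : E3 →L[ℝ] ℝ) (b : E3 → E3 → ℝ) (v : Fin 3 → E3) : ℝ :=
  (1 / 2 : ℝ) * ∑ σ : Equiv.Perm (Fin 3),
    ((Equiv.Perm.sign σ : ℤ) : ℝ) * a (v (σ 0)) * b (v (σ 1)) (v (σ 2))

lemma wedge12_eq (a : E3 →L[ℝ] ℝ) (b : E3 → E3 → ℝ) (hb : ∀ u v, b u v = - b v u)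
    (v : Fin 3 → E3) :
    wedge12 a b v = a (v 0) * b (v 1) (v 2) + a (v 1) * b (v 2) (v 0)
      + a (v 2) * b (v 0) (v 1) := by
  unfold wedge12
  rw [← Equiv.sum_comp (Equiv.Perm.decomposeFin.symm) ]
  rw [Fintype.sum_prod_type]
  simp only [← Equiv.sum_comp (Equiv.Perm.decomposeFin.symm : Fin 2 × Equiv.Perm (Fin 1) ≃ _)]
  simp only [Fintype.sum_prod_type]
  simp [Fin.sum_univ_succ, Equiv.Perm.decomposeFin.symm_sign,
    Equiv.Perm.decomposeFin_symm_apply_zero, Equiv.Perm.decomposeFin_symm_apply_succ]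
  rw [show (Equiv.Perm.decomposeFin.symm ((0:Fin 3), Equiv.swap 0 1)) 2 = 1 by decide,
    show (Equiv.Perm.decomposeFin.symm ((1:Fin 3), Equiv.swap 0 1)) 2 = 0 by decide,
    show (Equiv.Perm.decomposeFin.symm ((2:Fin 3), Equiv.swap 0 1)) 2 = 1 by decide,
    show ((Equiv.swap (0:Fin 3) 1)) 2 = 2 by decide,
    show ((Equiv.swap (0:Fin 3) 2)) 1 = 1 by decide]
  rw [hb (v 2) (v 1), hb (v 0) (v 2), hb (v 1) (v 0)]
  ring

lemma extd_antisymm (ω : E3 → E3 →L[ℝ] ℝ) (x u v : E3) :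
    extd ω x u v = - extd ω x v u := by unfold extd; ring

lemma extd_self (ω : E3 → E3 →L[ℝ] ℝ) (x u : E3) : extd ω x u u = 0 := sub_self _

lemma extd_eq (ω : E3 → E3 →L[ℝ] ℝ) (hω : Differentiable ℝ ω) (x u v : E3) :
    extd ω x u v = fderiv ℝ ω x u v - fderiv ℝ ω x v u := by
  unfold extd
  rw [fderiv_clm_apply (hω x) (differentiableAt_const v),
    fderiv_clm_apply (hω x) (differentiableAt_const u)]
  simp

lemma extd_smul_add_vec (ω : E3 → E3 →L[ℝ] ℝ) (hω : Differentiable ℝ ω) (x : E3)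
    (c d : ℝ) (u w v : E3) :
    extd ω x (c • u + d • w) v = c * extd ω x u v + d * extd ω x w v := by
  rw [extd_eq ω hω, extd_eq ω hω, extd_eq ω hω]
  simp [map_add, map_smul]
  ring

lemma extd_combo (ω₁ ω₂ : E3 → E3 →L[ℝ] ℝ) (hω₁ : Differentiable ℝ ω₁)
    (hω₂ : Differentiable ℝ ω₂) (l₁ l₂ : ℝ) (x u v : E3) :
    extd (fun y => l₁ • ω₁ y + l₂ • ω₂ y) x u v
      = l₁ * extd ω₁ x u v + l₂ * extd ω₂ x u v := by
  have hA : ∀ z : E3, DifferentiableAt ℝ (fun y => ω₁ y z) x := fun z =>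
    (hω₁ x).clm_apply (differentiableAt_const z)
  have hB : ∀ z : E3, DifferentiableAt ℝ (fun y => ω₂ y z) x := fun z =>
    (hω₂ x).clm_apply (differentiableAt_const z)
  have key : ∀ z : E3, (fun y => (l₁ • ω₁ y + l₂ • ω₂ y) z)
      = fun y => l₁ * (ω₁ y z) + l₂ * (ω₂ y z) := by
    intro z; funext y; simp
  unfold extd
  rw [key u, key v, fderiv_fun_add ((hA v).const_mul l₁) ((hB v).const_mul l₂),
    fderiv_fun_add ((hA u).const_mul l₁) ((hB u).const_mul l₂),
    fderiv_const_mul (hA v) l₁, fderiv_const_mul (hB v) l₂,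
    fderiv_const_mul (hA u) l₁, fderiv_const_mul (hB u) l₂]
  simp
  ring

lemma wedge12_vanish (a : E3 →L[ℝ] ℝ) (b : E3 → E3 → ℝ)
    (B : E3 →L[ℝ] E3 →L[ℝ] ℝ) (hbB : ∀ u v, b u v = B u v - B v u)
    (w : E3) (hw : w ≠ 0) (haw : a w = 0) (hbw : ∀ v, b w v = 0)
    (v : Fin 3 → E3) : wedge12 a b v = 0 := by
  have hb_skew : ∀ u v', b u v' = - b v' u := by
    intro u v'; rw [hbB, hbB]; ring
  rw [wedge12_eq a b hb_skew]
  obtain ⟨j, hj⟩ : ∃ j, w j ≠ 0 := by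
    by_contra h
    push_neg at h
    exact hw (funext h)
  have hpq : ∃ p q : E3, ∀ u : E3, ∃ c s t : ℝ, u = c • w + s • p + t • q := by
    fin_cases j
    · refine ⟨Pi.single 1 1, Pi.single 2 1, fun u => ⟨u 0 / w 0,
        u 1 - u 0 / w 0 * w 1, u 2 - u 0 / w 0 * w 2, ?_⟩⟩
      have hj' : w 0 ≠ 0 := hj
      funext m
      fin_cases m <;> simp [Pi.single_apply] <;> field_simp [hj']
    · refine ⟨Pi.single 0 1, Pi.single 2 1, fun u => ⟨u 1 / w 1,
        u 0 - u 1 / w 1 * w 0, u 2 - u 1 / w 1 * w 2, ?_⟩⟩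
      have hj' : w 1 ≠ 0 := hj
      funext m
      fin_cases m <;> simp [Pi.single_apply] <;> field_simp [hj']
    · refine ⟨Pi.single 0 1, Pi.single 1 1, fun u => ⟨u 2 / w 2,
        u 0 - u 2 / w 2 * w 0, u 1 - u 2 / w 2 * w 1, ?_⟩⟩
      have hj' : w 2 ≠ 0 := hj
      funext m
      fin_cases m <;> simp [Pi.single_apply] <;> field_simp [hj']
  obtain ⟨p, q, hpq⟩ := hpq
  obtain ⟨c₀, s₀, t₀, h0⟩ := hpq (v 0)
  obtain ⟨c₁, s₁, t₁, h1⟩ := hpq (v 1)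
  obtain ⟨c₂, s₂, t₂, h2⟩ := hpq (v 2)
  have e1 : B w p = B p w := by have := hbw p; rw [hbB] at this; linarith
  have e2 : B w q = B q w := by have := hbw q; rw [hbB] at this; linarith
  rw [h0, h1, h2]
  simp only [hbB, map_add, map_smul, ContinuousLinearMap.add_apply,
    ContinuousLinearMap.smul_apply, smul_eq_mul, haw, e1, e2]
  ring

/-- If `(ω₁, ω₂)` generates a taut contact circle on a 3-manifold with Reeb
fields `R₁, R₂` (taut: `ω₁∧dω₁ = ω₂∧dω₂` and `ω₁∧dω₂ = −ω₂∧dω₁`), then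
`R₁ ⨼ dω₂ + R₂ ⨼ dω₁ = 0` and `(R₁ ⨼ dω₂)·(ω₁(R₂) + ω₂(R₁)) = 0`; combined
with the everywhere linear independence of `R₁, R₂` (which forces
`R₁ ⨼ dω₂ ≠ 0` everywhere), it follows that the contact circle is round. -/
theorem stmt17 (ω₁ ω₂ : E3 → E3 →L[ℝ] ℝ)
    (h₁ : ContDiff ℝ (⊤ : ℕ∞) ω₁) (h₂ : ContDiff ℝ (⊤ : ℕ∞) ω₂)
    (R₁ R₂ : E3 → E3)
    (hR₁ : ∀ x, ω₁ x (R₁ x) = 1 ∧ ∀ v, extd ω₁ x (R₁ x) v = 0)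
    (hR₂ : ∀ x, ω₂ x (R₂ x) = 1 ∧ ∀ v, extd ω₂ x (R₂ x) v = 0)
    (hcircle : ∀ l₁ l₂ : ℝ, l₁ ^ 2 + l₂ ^ 2 = 1 → ∀ x, ∃ v : Fin 3 → E3,
      wedge12 (l₁ • ω₁ x + l₂ • ω₂ x)
        (extd (fun y => l₁ • ω₁ y + l₂ • ω₂ y) x) v ≠ 0)
    (htaut₁ : ∀ x v, wedge12 (ω₁ x) (extd ω₁ x) v = wedge12 (ω₂ x) (extd ω₂ x) v)
    (htaut₂ : ∀ x v, wedge12 (ω₁ x) (extd ω₂ x) v = -wedge12 (ω₂ x) (extd ω₁ x) v) :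
    (∀ x u, extd ω₂ x (R₁ x) u + extd ω₁ x (R₂ x) u = 0) ∧
    (∀ x u, extd ω₂ x (R₁ x) u * (ω₁ x (R₂ x) + ω₂ x (R₁ x)) = 0) ∧
    (∀ x, LinearIndependent ℝ ![R₁ x, R₂ x]) ∧
    -- roundness: the Reeb field of `λ₁ω₁ + λ₂ω₂` is `λ₁R₁ + λ₂R₂`
    (∀ l₁ l₂ : ℝ, l₁ ^ 2 + l₂ ^ 2 = 1 → ∀ x,
      (l₁ • ω₁ x + l₂ • ω₂ x) (l₁ • R₁ x + l₂ • R₂ x) = 1 ∧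
      ∀ v, extd (fun y => l₁ • ω₁ y + l₂ • ω₂ y) x
        (l₁ • R₁ x + l₂ • R₂ x) v = 0) := by
  have hd₁ : Differentiable ℝ ω₁ := h₁.differentiable (by simp)
  have hd₂ : Differentiable ℝ ω₂ := h₂.differentiable (by simp)
  have key1 : ∀ x u, extd ω₂ x (R₁ x) u + extd ω₁ x (R₂ x) u = 0 := by
    intro x u
    obtain ⟨hw1, hr1⟩ := hR₁ x
    obtain ⟨hw2, hr2⟩ := hR₂ x
    have h := htaut₁ x ![R₁ x, R₂ x, u]
    rw [wedge12_eq _ _ (extd_antisymm ω₁ x), wedge12_eq _ _ (extd_antisymm ω₂ x)] at h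
    simp only [Matrix.cons_val_zero, Matrix.cons_val_one, Matrix.head_cons,
      Matrix.cons_val_two, Matrix.tail_cons] at h
    rw [extd_antisymm ω₁ x u (R₁ x), extd_antisymm ω₂ x u (R₁ x),
      extd_antisymm ω₂ x (R₁ x) (R₂ x)] at h
    simp only [hr1, hr2, hw1, hw2] at h
    linarith
  have key2 : ∀ x u, extd ω₂ x (R₁ x) u * (ω₁ x (R₂ x) + ω₂ x (R₁ x)) = 0 := by
    intro x u
    obtain ⟨hw1, hr1⟩ := hR₁ x
    obtain ⟨hw2, hr2⟩ := hR₂ x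
    have hd21 : extd ω₂ x (R₁ x) (R₂ x) = 0 := by
      have := key1 x (R₂ x)
      rw [extd_self] at this
      linarith
    have hd12 : ∀ v, extd ω₁ x (R₂ x) v = - extd ω₂ x (R₁ x) v := by
      intro v'; have := key1 x v'; linarith
    have h := htaut₂ x ![R₁ x, R₂ x, u]
    rw [wedge12_eq _ _ (extd_antisymm ω₂ x), wedge12_eq _ _ (extd_antisymm ω₁ x)] at h
    simp only [Matrix.cons_val_zero, Matrix.cons_val_one, Matrix.head_cons,
      Matrix.cons_val_two, Matrix.tail_cons] at h
    rw [extd_antisymm ω₂ x u (R₁ x), extd_antisymm ω₁ x u (R₁ x)] at h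
    simp only [hr1, hr2, hw1, hw2, hd21, hd12] at h
    ring_nf at h ⊢
    nlinarith [h]
  have keyA : ∀ x, ∃ u, extd ω₂ x (R₁ x) u ≠ 0 := by
    intro x
    by_contra hcon
    push_neg at hcon
    obtain ⟨hw1, hr1⟩ := hR₁ x
    set c := ω₂ x (R₁ x) with hc
    have hrpos : (0:ℝ) < Real.sqrt (1 + c ^ 2) := Real.sqrt_pos.mpr (by positivity)
    have hr2 : Real.sqrt (1 + c ^ 2) ^ 2 = 1 + c ^ 2 := Real.sq_sqrt (by positivity)
    set r := Real.sqrt (1 + c ^ 2)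
    have hl : (-(c / r)) ^ 2 + (1 / r) ^ 2 = 1 := by
      field_simp
      linarith [hr2]
    obtain ⟨v, hv⟩ := hcircle (-(c / r)) (1 / r) hl x
    apply hv
    have hω' : Differentiable ℝ (fun y => (-(c / r)) • ω₁ y + (1 / r) • ω₂ y) :=
      (hd₁.fun_const_smul _).fun_add (hd₂.fun_const_smul _)
    refine wedge12_vanish _ _ (fderiv ℝ (fun y => (-(c / r)) • ω₁ y + (1 / r) • ω₂ y) x)
      (fun u v' => extd_eq _ hω' x u v') (R₁ x) ?_ ?_ ?_ v
    · intro h0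
      rw [h0] at hw1
      simp at hw1
    · simp only [ContinuousLinearMap.add_apply, ContinuousLinearMap.coe_smul',
        Pi.smul_apply, smul_eq_mul, hw1, ← hc]
      field_simp
      ring
    · intro v'
      rw [extd_combo ω₁ ω₂ hd₁ hd₂ _ _ x _ v', hr1 v', hcon v']
      ring
  refine ⟨key1, key2, ?_, ?_⟩
  · intro x
    obtain ⟨u, hu⟩ := keyA x
    obtain ⟨hw2, hr2⟩ := hR₂ x
    rw [LinearIndependent.pair_iff]
    intro s t hst
    have h := extd_smul_add_vec ω₂ hd₂ x s t (R₁ x) (R₂ x) u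
    rw [hst] at h
    have h0 : extd ω₂ x 0 u = 0 := by
      rw [extd_eq ω₂ hd₂]
      simp
    rw [h0, hr2 u] at h
    have hs : s = 0 := by
      have hmul : s * extd ω₂ x (R₁ x) u = 0 := by linarith
      exact (mul_eq_zero.mp hmul).resolve_right hu
    refine ⟨hs, ?_⟩
    rw [hs] at hst
    simp only [zero_smul, zero_add] at hst
    rcases smul_eq_zero.mp hst with ht | h2
    · exact ht
    · exfalso
      rw [h2] at hw2
      simp at hw2
  · intro l₁ l₂ hl x
    obtain ⟨hw1, hr1⟩ := hR₁ x
    obtain ⟨hw2, hr2⟩ := hR₂ x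
    have hs0 : ω₁ x (R₂ x) + ω₂ x (R₁ x) = 0 := by
      obtain ⟨u, hu⟩ := keyA x
      exact (mul_eq_zero.mp (key2 x u)).resolve_left hu
    constructor
    · simp only [ContinuousLinearMap.add_apply, ContinuousLinearMap.coe_smul',
        Pi.smul_apply, map_add, map_smul, smul_eq_mul, hw1, hw2]
      linear_combination hl + l₁ * l₂ * hs0
    · intro v
      have hω' : Differentiable ℝ (fun y => l₁ • ω₁ y + l₂ • ω₂ y) :=
        (hd₁.fun_const_smul _).fun_add (hd₂.fun_const_smul _)
      rw [extd_smul_add_vec _ hω' x l₁ l₂ (R₁ x) (R₂ x) v,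
        extd_combo ω₁ ω₂ hd₁ hd₂ l₁ l₂ x (R₁ x) v,
        extd_combo ω₁ ω₂ hd₁ hd₂ l₁ l₂ x (R₂ x) v, hr1 v, hr2 v]
      linear_combination l₁ * l₂ * key1 x v

end
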